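/- Suppose man m pushes up a set X of women below his DA partner without incurring regret and the DA matching changes (μ' ≠ μ). Then at least two distinct women are strictly better off under μ' than under μ, and at least two distinct men are strictly worse off under μ' than under μ. -/

import Mathlib

/-- A stable marriage profile: `M m` is man `m`'s ranking of women
(`M m k` = his `k`-th favorite woman), `W w` is woman `w`'s ranking of men. -/
structure Profile (n : ℕ) where
  M : Fin n → (Fin n ≃ Fin n)
  W : Fin n → (Fin n ≃ Fin n)

/-- Man `m` strictly prefers woman `w₁` to woman `w₂`. -/
def Profile.mpref {n : ℕ} (P : Profile n) (m w₁ w₂ : Fin n) : Prop :=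
  (P.M m).symm w₁ < (P.M m).symm w₂

/-- Woman `w` strictly prefers man `m₁` to man `m₂`. -/
def Profile.wpref {n : ℕ} (P : Profile n) (w m₁ m₂ : Fin n) : Prop :=
  (P.W w).symm m₁ < (P.W w).symm m₂

/-- State of the Gale–Shapley (deferred acceptance) algorithm:
`next m` is the rank of the next woman `m` will propose to, `wmatch w` is the man
currently (tentatively) held by woman `w`, `props` records all proposals made so far. -/
structure GSState (n : ℕ) where
  next : Fin n → ℕ
  wmatch : Fin n → Option (Fin n)
  props : List (Fin n × Fin n)

/-- Man `m` is currently not held by any woman. -/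
def isUnmatched {n : ℕ} (s : GSState n) (m : Fin n) : Bool :=
  decide (∀ w, s.wmatch w ≠ some m)

/-- One step of men-proposing deferred acceptance: the first unmatched man
proposes to the next woman on his list; she keeps her favorite proposer so far. -/
def GSstep {n : ℕ} (P : Profile n) (s : GSState n) : GSState n :=
  match (List.finRange n).find? (fun m => isUnmatched s m && decide (s.next m < n)) with
  | none => s
  | some m =>
    if h : s.next m < n then
      let w := P.M m ⟨s.next m, h⟩
      let s' : GSState n :=
        { next := Function.update s.next m (s.next m + 1),
          wmatch := s.wmatch,
          props := (m, w) :: s.props }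
      match s.wmatch w with
      | none => { s' with wmatch := Function.update s.wmatch w (some m) }
      | some m' =>
          if (P.W w).symm m < (P.W w).symm m' then
            { s' with wmatch := Function.update s.wmatch w (some m) }
          else s'
    else s

def GSinit (n : ℕ) : GSState n := ⟨fun _ => 0, fun _ => none, []⟩

/-- Run deferred acceptance to completion (at most `n*n` proposals occur). -/
def GSrun {n : ℕ} (P : Profile n) : GSState n := (GSstep P)^[n * n + 1] (GSinit n)

/-- The men-proposing deferred acceptance matching, as a map from men to women. -/
noncomputable def DA {n : ℕ} (P : Profile n) : Fin n → Fin n :=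
  fun m => if h : ∃ w, (GSrun P).wmatch w = some m then h.choose else m

/-- Man `m` proposes to woman `w` during the run of deferred acceptance on `P`. -/
def Proposes {n : ℕ} (P : Profile n) (m w : Fin n) : Prop :=
  (m, w) ∈ (GSrun P).props

/-- `(m, w)` is a blocking pair for the matching `μ` (men to women) w.r.t. profile `P`. -/
def Blocks {n : ℕ} (P : Profile n) (μ : Fin n → Fin n) (m w : Fin n) : Prop :=
  P.mpref m w (μ m) ∧ ∃ m', μ m' = w ∧ P.wpref w m m'

/-- `μ` is a stable matching with respect to profile `P`. -/
def Stable {n : ℕ} (P : Profile n) (μ : Fin n → Fin n) : Prop :=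
  Function.Bijective μ ∧ ∀ m w, ¬ Blocks P μ m w

/-- Replace man `m`'s preference list by `e`. -/
def Profile.updateM {n : ℕ} (P : Profile n) (m : Fin n) (e : Fin n ≃ Fin n) : Profile n :=
  { P with M := Function.update P.M m e }

/-- Replace woman `w`'s preference list by `e`. -/
def Profile.updateW {n : ℕ} (P : Profile n) (w : Fin n) (e : Fin n ≃ Fin n) : Profile n :=
  { P with W := Function.update P.W w e }

/-- The set of women ranked strictly above `w₀` in the list `e`. -/
def Above {n : ℕ} (e : Fin n ≃ Fin n) (w₀ : Fin n) : Set (Fin n) :=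
  {w | e.symm w < e.symm w₀}

/-- The set of women ranked strictly below `w₀` in the list `e`. -/
def Below {n : ℕ} (e : Fin n ≃ Fin n) (w₀ : Fin n) : Set (Fin n) :=
  {w | e.symm w₀ < e.symm w}

/-- `e'` is obtained from man `m`'s true list by pushing up the set `X` and pushing
down the set `Y` around the pivot `DA P m` (the order of women above and below
the pivot is immaterial, cf. Proposition 2 of the paper). -/
def PushUpDown {n : ℕ} (P : Profile n) (m : Fin n) (X Y : Set (Fin n))
    (e' : Fin n ≃ Fin n) : Prop :=
  Above e' (DA P m) = (Above (P.M m) (DA P m) ∪ X) \ Y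

/-- `e'` is obtained from `m`'s true list by pushing up the set `X` above `DA P m`. -/
def PushUp {n : ℕ} (P : Profile n) (m : Fin n) (X : Set (Fin n))
    (e' : Fin n ≃ Fin n) : Prop :=
  PushUpDown P m X ∅ e'

/-- `e'` is obtained from `m`'s true list by pushing down the set `Y` below `DA P m`. -/
def PushDown {n : ℕ} (P : Profile n) (m : Fin n) (Y : Set (Fin n))
    (e' : Fin n ≃ Fin n) : Prop :=
  PushUpDown P m ∅ Y e'

/-- Woman `w` is ranked below `DA P m` in `m`'s true list, and pushing her up
individually leaves `m`'s deferred acceptance partner unchanged (no regret). -/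
def NoRegretWoman {n : ℕ} (P : Profile n) (m w : Fin n) : Prop :=
  w ∈ Below (P.M m) (DA P m) ∧
    ∀ e' : Fin n ≃ Fin n, PushUp P m {w} e' → DA (P.updateM m e') m = DA P m

/-- The no-regret set `W^NR` of accomplice `m`. -/
def WNR {n : ℕ} (P : Profile n) (m : Fin n) : Set (Fin n) :=
  {w | NoRegretWoman P m w}

/-!
Pushing `X` up in `m`'s list only enlarges the set of women he ranks above `μ m`; since
`μ' m = μ m`, every pair blocking `μ'` for the true profile also blocks it for the manipulated
one, so `μ'` is stable for the true profile. Man-optimality of deferred acceptance then makes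
every man whose partner changed strictly worse off under `μ'`. If such a man `a` now has the
woman `w`, her `μ`-partner `b ≠ a` also changed and so prefers `w` to `μ' b`; stability of `μ'`
forces `w` to prefer `a` to `b`. Finally the man `μ⁻¹ (μ' a)` is a second changed man, matched
under `μ'` to a second woman.
-/

section Preferences

variable {n : ℕ} (P : Profile n)

lemma Profile.mpref_of_le_of_ne {m w₁ w₂ : Fin n} (hle : (P.M m).symm w₁ ≤ (P.M m).symm w₂)
    (hne : w₁ ≠ w₂) : P.mpref m w₁ w₂ :=
  lt_of_le_of_ne hle fun h => hne ((P.M m).symm.injective h)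

lemma Profile.wpref_of_not_wpref {w m₁ m₂ : Fin n} (h : ¬ P.wpref w m₁ m₂) (hne : m₁ ≠ m₂) :
    P.wpref w m₂ m₁ :=
  lt_of_le_of_ne (not_lt.1 h) fun h => hne ((P.W w).symm.injective h).symm

end Preferences

namespace GSState

variable {n : ℕ} {P : Profile n} {s : GSState n}

/-- The Gale–Shapley invariant. `s.next m` is the number of proposals `m` has made, to the top
women of his list in order; the key field `ne_of_rejected` says that no man is ever rejected by a
stable partner. -/
structure Inv (P : Profile n) (s : GSState n) : Prop where
  next_le : ∀ m, s.next m ≤ n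
  rank_add_one : ∀ m w, s.wmatch w = some m → ((P.M m).symm w : ℕ) + 1 = s.next m
  held_of_proposed : ∀ m w, ((P.M m).symm w : ℕ) < s.next m →
    ∃ m', s.wmatch w = some m' ∧ (P.W w).symm m' ≤ (P.W w).symm m
  ne_of_rejected : ∀ ν, Stable P ν → ∀ m w, ((P.M m).symm w : ℕ) < s.next m →
    s.wmatch w ≠ some m → ν m ≠ w

lemma inv_GSinit (P : Profile n) : Inv P (GSinit n) where
  next_le _ := Nat.zero_le n
  rank_add_one _ _ h := by simp [GSinit] at h
  held_of_proposed _ _ h := by simp [GSinit] at h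
  ne_of_rejected _ _ _ _ h := by simp [GSinit] at h

namespace Inv

lemma eq_of_held (hs : Inv P s) {m u v : Fin n} (hu : s.wmatch u = some m)
    (hv : s.wmatch v = some m) : u = v := by
  have h := (hs.rank_add_one m u hu).trans (hs.rank_add_one m v hv).symm
  exact (P.M m).symm.injective (Fin.ext (by omega))

lemma next_le_rank (hs : Inv P s) {ν : Fin n → Fin n} (hν : Stable P ν) {m : Fin n}
    (hm : s.wmatch (ν m) ≠ some m) : s.next m ≤ (P.M m).symm (ν m) :=
  not_lt.1 fun h => hs.ne_of_rejected ν hν m (ν m) h hm rfl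

lemma mpref_of_held (hs : Inv P s) {ν : Fin n → Fin n} (hν : Stable P ν) {m w : Fin n}
    (hw : s.wmatch w = some m) (hne : ν m ≠ w) : P.mpref m w (ν m) := by
  have hrank := hs.rank_add_one m w hw
  have hle := hs.next_le_rank hν fun h => hne (hs.eq_of_held h hw)
  exact Fin.lt_def.2 (by omega)

end Inv

variable {m w : Fin n}

lemma lt_update_next (hw : ((P.M m).symm w : ℕ) = s.next m) {a u : Fin n}
    (h : ((P.M a).symm u : ℕ) < Function.update s.next m (s.next m + 1) a) :
    ((P.M a).symm u : ℕ) < s.next a ∨ a = m ∧ u = w := by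
  rcases eq_or_ne a m with rfl | ha
  · rw [Function.update_self] at h
    rcases (Nat.lt_succ_iff.1 h).lt_or_eq with h | h
    · exact Or.inl h
    · exact Or.inr ⟨rfl, (P.M a).symm.injective (Fin.ext (h.trans hw.symm))⟩
  · rw [Function.update_of_ne ha] at h
    exact Or.inl h

lemma update_next_le (hs : Inv P s) (hw : ((P.M m).symm w : ℕ) = s.next m) (a : Fin n) :
    Function.update s.next m (s.next m + 1) a ≤ n := by
  rcases eq_or_ne a m with rfl | ha
  · rw [Function.update_self, ← hw]
    exact ((P.M a).symm w).isLt
  · rw [Function.update_of_ne ha]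
    exact hs.next_le a

namespace Inv

lemma accept (hs : Inv P s) (hm : ∀ u, s.wmatch u ≠ some m)
    (hw : ((P.M m).symm w : ℕ) = s.next m) (hacc : ∀ m', s.wmatch w = some m' → P.wpref w m m')
    (l : List (Fin n × Fin n)) :
    Inv P ⟨Function.update s.next m (s.next m + 1), Function.update s.wmatch w (some m), l⟩ where
  next_le := update_next_le hs hw
  rank_add_one a u h := by
    dsimp only at h ⊢
    rcases eq_or_ne u w with rfl | hu
    · obtain rfl : m = a := by simpa using h
      simp [hw]
    · rw [Function.update_of_ne hu] at h
      rw [Function.update_of_ne fun ha : a = m => hm u (ha ▸ h)]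
      exact hs.rank_add_one a u h
  held_of_proposed a u h := by
    dsimp only
    rcases eq_or_ne u w with rfl | hu
    · refine ⟨m, Function.update_self .., ?_⟩
      rcases lt_update_next hw h with h | ⟨rfl, -⟩
      · obtain ⟨m', hm', hle⟩ := hs.held_of_proposed a u h
        exact (hacc m' hm').le.trans hle
      · exact le_rfl
    · rw [Function.update_of_ne hu]
      rcases lt_update_next hw h with h | ⟨-, rfl⟩
      · exact hs.held_of_proposed a u h
      · exact absurd rfl hu
  ne_of_rejected ν hν a u h hrej := by
    dsimp only at hrej
    rcases lt_update_next hw h with hlt | ⟨rfl, rfl⟩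
    · rcases eq_or_ne u w with rfl | hu
      · by_cases hheld : s.wmatch u = some a
        · -- `a` is the man displaced by `m`
          intro hνa
          have ham : a ≠ m := fun h => hm u (h ▸ hheld)
          have hνm : ν m ≠ u := fun h => ham (hν.1.1 (hνa.trans h.symm))
          refine hν.2 m u ⟨P.mpref_of_le_of_ne ?_ hνm.symm, a, hνa, hacc a hheld⟩
          exact Fin.le_def.2 (hw.trans_le (hs.next_le_rank hν (hm _)))
        · exact hs.ne_of_rejected ν hν a u hlt hheld
      · exact hs.ne_of_rejected ν hν a u hlt (by rwa [Function.update_of_ne hu] at hrej)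
    · exact absurd (Function.update_self ..) hrej

lemma reject (hs : Inv P s) (hm : ∀ u, s.wmatch u ≠ some m)
    (hw : ((P.M m).symm w : ℕ) = s.next m) {m' : Fin n} (hm' : s.wmatch w = some m')
    (hrej : P.wpref w m' m) (l : List (Fin n × Fin n)) :
    Inv P ⟨Function.update s.next m (s.next m + 1), s.wmatch, l⟩ where
  next_le := update_next_le hs hw
  rank_add_one a u h := by
    dsimp only at h ⊢
    rw [Function.update_of_ne fun ha : a = m => hm u (ha ▸ h)]
    exact hs.rank_add_one a u h
  held_of_proposed a u h := by
    rcases lt_update_next hw h with h | ⟨rfl, rfl⟩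
    · exact hs.held_of_proposed a u h
    · exact ⟨m', hm', hrej.le⟩
  ne_of_rejected ν hν a u h hr := by
    rcases lt_update_next hw h with h | ⟨rfl, rfl⟩
    · exact hs.ne_of_rejected ν hν a u h hr
    · intro hνa
      have hνm' : ν m' ≠ u := fun h => hm u (hν.1.1 (h.trans hνa.symm) ▸ hm')
      exact hν.2 m' u ⟨hs.mpref_of_held hν hm' hνm', a, hνa, hrej⟩

lemma step (hs : Inv P s) : Inv P (GSstep P s) := by
  unfold GSstep
  split
  · exact hs
  next m hfind =>
    obtain ⟨hm, hlt⟩ : isUnmatched s m = true ∧ s.next m < n := by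
      simpa only [Bool.and_eq_true, decide_eq_true_eq] using List.find?_some hfind
    replace hm : ∀ u, s.wmatch u ≠ some m := by simpa [isUnmatched] using hm
    have hw : ((P.M m).symm (P.M m ⟨s.next m, hlt⟩) : ℕ) = s.next m := by simp
    rw [dif_pos hlt]
    dsimp only
    split
    next hnone => exact hs.accept hm hw (fun _ h => by simp [hnone] at h) _
    next m' hm' =>
      split
      next hpref => exact hs.accept hm hw (fun _ h => by simp_all [Profile.wpref]) _
      next hpref =>
        refine hs.reject hm hw hm' (P.wpref_of_not_wpref hpref ?_) _
        rintro rfl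
        exact hm _ hm'

end Inv

lemma inv_iterate (P : Profile n) (k : ℕ) : Inv P ((GSstep P)^[k] (GSinit n)) := by
  induction k with
  | zero => exact inv_GSinit P
  | succ k ih => rw [Function.iterate_succ_apply']; exact ih.step

lemma inv_GSrun (P : Profile n) : Inv P (GSrun P) := inv_iterate P _

def potential (s : GSState n) : ℕ := ∑ a, s.next a

lemma Inv.potential_le (hs : Inv P s) : s.potential ≤ n * n := by
  simpa [potential] using Finset.sum_le_sum fun a (_ : a ∈ Finset.univ) => hs.next_le a

lemma GSstep_eq_or (P : Profile n) (s : GSState n) :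
    (GSstep P s = s ∧ ∀ m, (∀ u, s.wmatch u ≠ some m) → n ≤ s.next m) ∨
      ∃ m, s.next m < n ∧ (GSstep P s).next = Function.update s.next m (s.next m + 1) := by
  unfold GSstep
  split
  next hfind =>
    refine Or.inl ⟨rfl, fun m hm => ?_⟩
    simpa [isUnmatched, hm] using List.find?_eq_none.1 hfind m (List.mem_finRange m)
  next m hfind =>
    obtain ⟨-, hlt⟩ : isUnmatched s m = true ∧ s.next m < n := by
      simpa only [Bool.and_eq_true, decide_eq_true_eq] using List.find?_some hfind
    refine Or.inr ⟨m, hlt, ?_⟩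
    rw [dif_pos hlt]
    dsimp only
    split
    · rfl
    · split <;> rfl

lemma GSstep_eq_self_or_potential (P : Profile n) (s : GSState n) :
    GSstep P s = s ∨ (GSstep P s).potential = s.potential + 1 := by
  rcases GSstep_eq_or P s with ⟨hfix, -⟩ | ⟨m, -, hnext⟩
  · exact Or.inl hfix
  · refine Or.inr ?_
    rw [potential, hnext, Finset.sum_update_of_mem (Finset.mem_univ m), potential,
      ← Finset.add_sum_erase _ _ (Finset.mem_univ m), Finset.sdiff_singleton_eq_erase]
    omega

lemma le_next_of_GSstep_eq_self (hfix : GSstep P s = s) {m : Fin n}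
    (hm : ∀ u, s.wmatch u ≠ some m) : n ≤ s.next m := by
  rcases GSstep_eq_or P s with ⟨-, hle⟩ | ⟨a, -, hnext⟩
  · exact hle m hm
  · have h := congrFun hnext a
    rw [hfix, Function.update_self] at h
    omega

end GSState

open GSState

variable {n : ℕ}

/-- Each step that is not a fixed point makes a proposal, and at most `n * n` proposals occur. -/
lemma GSstep_GSrun (P : Profile n) : GSstep P (GSrun P) = GSrun P := by
  obtain ⟨j, hj, hfix⟩ : ∃ j ≤ n * n,
      GSstep P ((GSstep P)^[j] (GSinit n)) = (GSstep P)^[j] (GSinit n) := by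
    by_contra! h
    have hgrow : ∀ k ≤ n * n + 1, k ≤ ((GSstep P)^[k] (GSinit n)).potential := by
      intro k
      induction k with
      | zero => exact fun _ => Nat.zero_le _
      | succ k ih =>
        intro hk
        rw [Function.iterate_succ_apply']
        rcases GSstep_eq_self_or_potential P ((GSstep P)^[k] (GSinit n)) with hfix | hpot
        · exact absurd hfix (h k (by omega))
        · have := ih (by omega)
          omega
    have := (inv_iterate P (n * n + 1)).potential_le
    have := hgrow (n * n + 1) le_rfl
    omega
  rw [GSrun, show n * n + 1 = (n * n + 1 - j) + j by omega, Function.iterate_add_apply,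
    Function.iterate_fixed hfix, hfix]

lemma exists_GSrun_wmatch_eq (P : Profile n) (m : Fin n) :
    ∃ w, (GSrun P).wmatch w = some m := by
  by_contra! hm
  have hs := inv_GSrun P
  have hnext : (GSrun P).next m = n :=
    le_antisymm (hs.next_le m) (le_next_of_GSstep_eq_self (GSstep_GSrun P) hm)
  have hheld : ∀ u, ∃ a, (GSrun P).wmatch u = some a := fun u =>
    (hs.held_of_proposed m u (by rw [hnext]; exact ((P.M m).symm u).isLt)).imp fun _ h => h.1
  choose holder hholder using hheld
  have hinj : Function.Injective holder := fun u v huv =>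
    hs.eq_of_held (hholder u) (huv ▸ hholder v)
  obtain ⟨u, hu⟩ := (Finite.injective_iff_surjective.1 hinj) m
  exact hm u (hu ▸ hholder u)

lemma GSrun_wmatch_DA (P : Profile n) (m : Fin n) : (GSrun P).wmatch (DA P m) = some m := by
  have h := exists_GSrun_wmatch_eq P m
  rw [DA, dif_pos h]
  exact h.choose_spec

lemma DA_injective (P : Profile n) : Function.Injective (DA P) := fun a b h =>
  Option.some_injective _ ((GSrun_wmatch_DA P a).symm.trans (h ▸ GSrun_wmatch_DA P b))

lemma DA_bijective (P : Profile n) : Function.Bijective (DA P) :=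
  Finite.injective_iff_bijective.1 (DA_injective P)

lemma DA_stable (P : Profile n) : Stable P (DA P) := by
  refine ⟨DA_bijective P, ?_⟩
  rintro a u ⟨hpref, b, rfl, hwpref⟩
  have hs := inv_GSrun P
  have hrank := hs.rank_add_one a _ (GSrun_wmatch_DA P a)
  obtain ⟨b', hb', hle⟩ := hs.held_of_proposed a (DA P b) (by have := Fin.lt_def.1 hpref; omega)
  rw [GSrun_wmatch_DA, Option.some_inj] at hb'
  exact absurd (hb' ▸ hle) (not_le.2 hwpref)

lemma mpref_DA_of_stable {P : Profile n} {ν : Fin n → Fin n} (hν : Stable P ν) {a : Fin n}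
    (ha : ν a ≠ DA P a) : P.mpref a (DA P a) (ν a) :=
  (inv_GSrun P).mpref_of_held hν (GSrun_wmatch_DA P a) ha

lemma PushUp.above_subset {P : Profile n} {m : Fin n} {X : Set (Fin n)} {e : Fin n ≃ Fin n}
    (h : PushUp P m X e) : Above (P.M m) (DA P m) ⊆ Above e (DA P m) := by
  rw [PushUp, PushUpDown, Set.sdiff_empty] at h
  exact h ▸ Set.subset_union_left

lemma Stable.of_updateM {P : Profile n} {m : Fin n} {e : Fin n ≃ Fin n} {ν : Fin n → Fin n}
    (hν : Stable (P.updateM m e) ν) (hsub : Above (P.M m) (ν m) ⊆ Above e (ν m)) :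
    Stable P ν := by
  refine ⟨hν.1, fun a u ⟨hpref, b, hb, hwpref⟩ => hν.2 a u ⟨?_, b, hb, hwpref⟩⟩
  rcases eq_or_ne a m with rfl | ha
  · simpa [Profile.mpref, Profile.updateM, Above] using hsub hpref
  · simpa [Profile.mpref, Profile.updateM, ha] using hpref

/-- Opposition of interests between men and women. -/
lemma Stable.exists_wpref_of_mpref {P : Profile n} {μ ν : Fin n → Fin n}
    (hμ : Function.Surjective μ) (hν : Stable P ν)
    (hmen : ∀ a, ν a ≠ μ a → P.mpref a (μ a) (ν a)) {a : Fin n} (ha : ν a ≠ μ a) :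
    ∃ b, μ b = ν a ∧ P.wpref (ν a) a b := by
  obtain ⟨b, hb⟩ := hμ (ν a)
  have hba : b ≠ a := by rintro rfl; exact ha hb.symm
  have hbchanged : ν b ≠ μ b := fun h => hba (hν.1.1 (h.trans hb))
  refine ⟨b, hb, P.wpref_of_not_wpref (fun hpref => hν.2 b (ν a) ?_) hba⟩
  exact ⟨hb ▸ hmen b hbchanged, a, rfl, hpref⟩

lemma exists_ne_apply_ne_of_apply_ne {α β : Type*} {μ ν : α → β} (hμ : Function.Surjective μ)
    (hν : Function.Injective ν) {a : α} (ha : ν a ≠ μ a) : ∃ c, c ≠ a ∧ ν c ≠ μ c := by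
  obtain ⟨c, hc⟩ := hμ (ν a)
  have hca : c ≠ a := by rintro rfl; exact ha hc.symm
  exact ⟨c, hca, fun h => hca (hν (h.trans hc))⟩

theorem strict_pushUp_two_better_two_worse_general (n : ℕ) (P : Profile n) (m : Fin n)
    (X : Set (Fin n))
    (e' : Fin n ≃ Fin n) (hpu : PushUp P m X e')
    (hnr : DA (P.updateM m e') m = DA P m)
    (hne : DA (P.updateM m e') ≠ DA P) :
    (∃ w₁ w₂ : Fin n, w₁ ≠ w₂ ∧
      (∃ a b : Fin n, DA (P.updateM m e') a = w₁ ∧ DA P b = w₁ ∧ P.wpref w₁ a b) ∧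
      (∃ a b : Fin n, DA (P.updateM m e') a = w₂ ∧ DA P b = w₂ ∧ P.wpref w₂ a b)) ∧
    (∃ m₁ m₂ : Fin n, m₁ ≠ m₂ ∧
      P.mpref m₁ (DA P m₁) (DA (P.updateM m e') m₁) ∧
      P.mpref m₂ (DA P m₂) (DA (P.updateM m e') m₂)) := by
  have hstable : Stable P (DA (P.updateM m e')) :=
    (DA_stable _).of_updateM (by rw [hnr]; exact hpu.above_subset)
  set μ' := DA (P.updateM m e')
  have hworse : ∀ a, μ' a ≠ DA P a → P.mpref a (DA P a) (μ' a) :=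
    fun _ => mpref_DA_of_stable hstable
  have hbetter : ∀ a, μ' a ≠ DA P a → ∃ b, DA P b = μ' a ∧ P.wpref (μ' a) a b :=
    fun _ => hstable.exists_wpref_of_mpref (DA_bijective P).2 hworse
  obtain ⟨a, ha⟩ := Function.ne_iff.1 hne
  obtain ⟨c, hca, hc⟩ := exists_ne_apply_ne_of_apply_ne (DA_bijective P).2 hstable.1.1 ha
  obtain ⟨b, hb, hab⟩ := hbetter a ha
  obtain ⟨d, hd, hcd⟩ := hbetter c hc
  exact ⟨⟨μ' a, μ' c, fun h => hca (hstable.1.1 h).symm, ⟨a, b, rfl, hb, hab⟩,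
    ⟨c, d, rfl, hd, hcd⟩⟩, a, c, hca.symm, hworse a ha, hworse c hc⟩

/-- If a no-regret push-up changes the DA matching, then at least two
distinct women are strictly better off and at least two distinct men are strictly
worse off. -/
theorem strict_pushUp_two_better_two_worse (n : ℕ) (P : Profile n) (m : Fin n)
    (X : Set (Fin n)) (hX : X ⊆ Below (P.M m) (DA P m))
    (e' : Fin n ≃ Fin n) (hpu : PushUp P m X e')
    (hnr : DA (P.updateM m e') m = DA P m)
    (hne : DA (P.updateM m e') ≠ DA P) :
    (∃ w₁ w₂ : Fin n, w₁ ≠ w₂ ∧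
      (∃ a b : Fin n, DA (P.updateM m e') a = w₁ ∧ DA P b = w₁ ∧ P.wpref w₁ a b) ∧
      (∃ a b : Fin n, DA (P.updateM m e') a = w₂ ∧ DA P b = w₂ ∧ P.wpref w₂ a b)) ∧
    (∃ m₁ m₂ : Fin n, m₁ ≠ m₂ ∧
      P.mpref m₁ (DA P m₁) (DA (P.updateM m e') m₁) ∧
      P.mpref m₂ (DA P m₂) (DA (P.updateM m e') m₂)) :=
  strict_pushUp_two_better_two_worse_general n P m X e' hpu hnr hne
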